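/- arXiv:0705.2546 — 3 statements merged into one kernel-verified Lean document; each statement's English description precedes it below -/
import Mathlib

section
/- Let Y be a metric space, let X ⊆ Y carry the restricted metric, and let 𝒰 be an (r,d)-cover of X. Then the closed neighborhood N_{r/4}(X) = {y ∈ Y : d(y, X) ≤ r/4}, with the metric restricted from Y, admits an (r/4, d+r)-cover 𝒰̃ with ord 𝒰̃ ≤ ord 𝒰. -/
/-- `CoverOrdLE 𝒰 m` : the order of the family `𝒰` (the maximal number of
members of `𝒰` having a common point) is at most `m`. -/
def CoverOrdLE {Y : Type*} (𝒰 : Set (Set Y)) (m : ℕ) : Prop :=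
  ∀ T : Finset (Set Y), ↑T ⊆ 𝒰 → (⋂₀ (T : Set (Set Y))).Nonempty → T.card ≤ m

/-- `IsRDCoverOn A r d 𝒰` : `𝒰` is an `(r,d)`-cover of the subset `A` of the
metric space `Y`: a cover of `A` by subsets of `A` of diameter at most `d`
whose Lebesgue number `L(𝒰) = inf_{x ∈ A} sup_{U ∈ 𝒰} d(x, A ∖ U)` is greater
than `r` (the infimum and supremum are computed in `ℝ≥0∞`, so that
`d(x, ∅) = ∞`). -/
def IsRDCoverOn {Y : Type*} [MetricSpace Y] (A : Set Y) (r d : ℝ)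
    (𝒰 : Set (Set Y)) : Prop :=
  (∀ U ∈ 𝒰, U ⊆ A) ∧ (A ⊆ ⋃₀ 𝒰) ∧
  (∀ U ∈ 𝒰, ∀ x ∈ U, ∀ y ∈ U, dist x y ≤ d) ∧
  ENNReal.ofReal r < ⨅ x ∈ A, ⨆ U ∈ 𝒰, EMetric.infEdist x (A \ U)

/-! The new cover consists of the sets `Ũ = {y ∈ N | B(y, r/3) ∩ X ⊆ U}`. A point `y` of
`N = N_{r/4}(X)` lies within `r/3` of some `x ∈ X`, and `x` lies in every `U` with `y ∈ Ũ`: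
this bounds the diameter of `Ũ` by `d + 2r/3` and the order of the new cover by that of `𝒰`.
Since `L(𝒰) > r` there is a `U ∈ 𝒰` with `B(x, r) ∩ X ⊆ U`, and the triangle inequality
puts `y` in `Ũ` at distance at least `r - r/3 - r/3 > r/4` from `N \ Ũ`. -/

open Metric Set

theorem CoverOrdLE.image {α β : Type*} {𝒰 : Set (Set α)} {m : ℕ} (h : CoverOrdLE 𝒰 m)
    (g : Set α → Set β) (hg : ∀ y, ∃ x, ∀ U ∈ 𝒰, y ∈ g U → x ∈ U) :
    CoverOrdLE (g '' 𝒰) m := by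
  classical
  intro T hT ⟨y, hy⟩
  obtain ⟨S, hS𝒰, rfl⟩ := Finset.subset_set_image_iff.1 hT
  obtain ⟨x, hx⟩ := hg y
  have hxS : x ∈ ⋂₀ (S : Set (Set α)) := fun U hU =>
    hx U (hS𝒰 hU) (hy _ (Finset.mem_coe.2 (Finset.mem_image_of_mem g hU)))
  exact Finset.card_image_le.trans (h S hS𝒰 ⟨x, hxS⟩)

section

variable {Y : Type*} [MetricSpace Y]

theorem IsRDCoverOn.exists_ball_inter_subset {A : Set Y} {r d : ℝ} {𝒰 : Set (Set Y)}
    (h : IsRDCoverOn A r d 𝒰) {x : Y} (hx : x ∈ A) : ∃ U ∈ 𝒰, ball x r ∩ A ⊆ U := by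
  obtain ⟨U, hU, hlt⟩ : ∃ U ∈ 𝒰, ENNReal.ofReal r < infEDist x (A \ U) := by
    have hlt := h.2.2.2.trans_le (iInf₂_le x hx)
    simp only [lt_iSup_iff, exists_prop] at hlt
    exact hlt
  refine ⟨U, hU, fun w ⟨hw, hwA⟩ => by_contra fun hwU => ?_⟩
  have hle : infEDist x (A \ U) ≤ ENNReal.ofReal (dist x w) :=
    edist_dist x w ▸ infEDist_le_edist_of_mem ⟨hwA, hwU⟩
  exact (hlt.trans_le hle).not_ge (ENNReal.ofReal_le_ofReal (mem_ball'.1 hw).le)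

theorem IsRDCoverOn.of_forall_exists {A : Set Y} {r d : ℝ} {s : ENNReal} {𝒰 : Set (Set Y)}
    (hsub : ∀ U ∈ 𝒰, U ⊆ A) (hdiam : ∀ U ∈ 𝒰, ∀ x ∈ U, ∀ y ∈ U, dist x y ≤ d)
    (hrs : ENNReal.ofReal r < s)
    (hleb : ∀ y ∈ A, ∃ U ∈ 𝒰, y ∈ U ∧ s ≤ infEDist y (A \ U)) :
    IsRDCoverOn A r d 𝒰 := by
  refine ⟨hsub, fun y hy => ?_, hdiam, hrs.trans_le (le_iInf₂ fun y hy => ?_)⟩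
  · obtain ⟨U, hU, hyU, -⟩ := hleb y hy
    exact ⟨U, hU, hyU⟩
  · obtain ⟨U, hU, -, hs⟩ := hleb y hy
    exact hs.trans (le_iSup₂_of_le U hU le_rfl)

def extension (N X : Set Y) (ρ : ℝ) (U : Set Y) : Set Y :=
  {y ∈ N | ball y ρ ∩ X ⊆ U}

variable {N X U : Set Y} {ρ : ℝ}

theorem extension_subset : extension N X ρ U ⊆ N := fun _ hy => hy.1

theorem exists_forall_mem_of_mem_extension (hN : N ⊆ thickening ρ X) (y : Y) :
    ∃ x, ∀ U, y ∈ extension N X ρ U → x ∈ U := by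
  by_cases hy : y ∈ N
  · obtain ⟨x, hxX, hyx⟩ := mem_thickening_iff.1 (hN hy)
    exact ⟨x, fun U hyU => hyU.2 ⟨mem_ball'.2 hyx, hxX⟩⟩
  · exact ⟨y, fun U hyU => absurd hyU.1 hy⟩

theorem dist_le_of_mem_extension (hN : N ⊆ thickening ρ X) {d : ℝ}
    (hdiam : ∀ x ∈ U, ∀ x' ∈ U, dist x x' ≤ d) {y y' : Y} (hy : y ∈ extension N X ρ U)
    (hy' : y' ∈ extension N X ρ U) : dist y y' ≤ d + 2 * ρ := by
  obtain ⟨x, hxX, hyx⟩ := mem_thickening_iff.1 (hN hy.1)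
  obtain ⟨x', hx'X, hy'x'⟩ := mem_thickening_iff.1 (hN hy'.1)
  have hxx' := hdiam x (hy.2 ⟨mem_ball'.2 hyx, hxX⟩) x' (hy'.2 ⟨mem_ball'.2 hy'x', hx'X⟩)
  calc dist y y' ≤ dist y x + dist x x' + dist x' y' := dist_triangle4 y x x' y'
    _ ≤ d + 2 * ρ := by rw [dist_comm x' y']; linarith

variable {x y : Y} {R δ : ℝ}

theorem mem_extension_of_ball_inter_subset (hU : ball x R ∩ X ⊆ U) (hy : y ∈ N)
    (hyx : dist y x < δ) (hR : δ + ρ ≤ R) : y ∈ extension N X ρ U := by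
  refine ⟨hy, fun w ⟨hw, hwX⟩ => hU ⟨?_, hwX⟩⟩
  calc dist w x ≤ dist w y + dist y x := dist_triangle w y x
    _ < R := by rw [mem_ball] at hw; linarith

theorem ofReal_sub_le_infEDist_diff_extension (hU : ball x R ∩ X ⊆ U) (hyx : dist y x < δ) :
    ENNReal.ofReal (R - δ - ρ) ≤ infEDist y (N \ extension N X ρ U) := by
  refine le_infEDist.2 fun z ⟨hzN, hz⟩ => ?_
  obtain ⟨w, ⟨hzw, hwX⟩, hwU⟩ : ∃ w ∈ ball z ρ ∩ X, w ∉ U :=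
    not_subset.1 fun h => hz ⟨hzN, h⟩
  have hxw : R ≤ dist w x := not_lt.1 fun h => hwU (hU ⟨h, hwX⟩)
  rw [edist_dist]
  refine ENNReal.ofReal_le_ofReal ?_
  have := dist_triangle4 w z y x
  rw [mem_ball] at hzw
  rw [dist_comm z y] at this
  linarith

end

/-- **Proposition 1.2.** Let `X ⊆ Y` carry the restricted metric and let `𝒰`
be an `(r,d)`-cover of `X`.  Then the closed neighborhood
`N_{r/4}(X) = {y ∈ Y : d(y, X) ≤ r/4}` admits an `(r/4, d + r)`-cover `𝒰̃`
with `ord 𝒰̃ ≤ ord 𝒰`. -/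
theorem rd_cover_of_neighborhood {Y : Type*} [MetricSpace Y] (X : Set Y)
    (r d : ℝ) (hr : 0 < r) (𝒰 : Set (Set Y)) (h𝒰 : IsRDCoverOn X r d 𝒰) :
    ∃ 𝒱 : Set (Set Y),
      IsRDCoverOn (Metric.cthickening (r / 4) X) (r / 4) (d + r) 𝒱 ∧
      ∀ m : ℕ, CoverOrdLE 𝒰 m → CoverOrdLE 𝒱 m := by
  set N := cthickening (r / 4) X
  have hN : N ⊆ thickening (r / 3) X :=
    cthickening_subset_thickening' (by positivity) (by linarith) X
  refine ⟨extension N X (r / 3) '' 𝒰, IsRDCoverOn.of_forall_exists ?_ ?_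
    ((ENNReal.ofReal_lt_ofReal_iff (by positivity)).2 (by linarith : r / 4 < r / 3)) ?_,
    fun m hm => hm.image _ fun y => (exists_forall_mem_of_mem_extension hN y).imp
      fun x hx U _ => hx U⟩
  · rintro _ ⟨U, -, rfl⟩
    exact extension_subset
  · rintro _ ⟨U, hU, rfl⟩ y hy y' hy'
    exact (dist_le_of_mem_extension hN (h𝒰.2.2.1 U hU) hy hy').trans (by linarith)
  · intro y hy
    obtain ⟨x, hxX, hyx⟩ := mem_thickening_iff.1 (hN hy)
    obtain ⟨U, hU, hUx⟩ := h𝒰.exists_ball_inter_subset hxX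
    refine ⟨_, ⟨U, hU, rfl⟩, mem_extension_of_ball_inter_subset hUx hy hyx (by linarith),
      (ENNReal.ofReal_le_ofReal (by linarith)).trans
        (ofReal_sub_le_infEDist_diff_extension hUx hyx)⟩
end

section
/- Let γ ∈ A *_C B have normal presentation γ = z₁⋯z_k c with k ≥ 1. Then ‖γ‖ ≥ d(z_k c, C), where ‖·‖ is the word norm of A *_C B with respect to S_A ∪ S_B and d(z_k c, C) = inf{d(z_k c, c'') : c'' ∈ C}. This holds for every choice of the sections s_A and s_B. -/
/-- The word norm of `g` with respect to the generating set `S`. -/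
noncomputable def wordNorm {G : Type*} [Group G] (S : Set G) (g : G) : ℕ :=
  sInf {k : ℕ | ∃ l : List G, l.length = k ∧ (∀ x ∈ l, x ∈ S) ∧ l.prod = g}

/-- The word metric on `G` associated with the generating set `S`. -/
noncomputable def wordDist {G : Type*} [Group G] (S : Set G) (g h : G) : ℝ :=
  (wordNorm S (g⁻¹ * h) : ℝ)

/-- `G` is the amalgamated free product `A *_C B` of its subgroups `A` and `B`
over the common subgroup `C`: `A` and `B` generate `G`, and any pair of
homomorphisms on `A` and `B` agreeing on `C` extends to `G` (this universal
property, together with the generation condition, characterizes `A *_C B`). -/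
def IsAmalgamatedProduct (G : Type*) [Group G] (A B C : Subgroup G) : Prop :=
  C ≤ A ∧ C ≤ B ∧ Subgroup.closure ((A : Set G) ∪ (B : Set G)) = ⊤ ∧
  ∀ {H : Type*} [Group H] (fA : A →* H) (fB : B →* H),
    (∀ (x : G) (hxA : x ∈ A) (hxB : x ∈ B), x ∈ C → fA ⟨x, hxA⟩ = fB ⟨x, hxB⟩) →
    ∃ f : G →* H, (∀ a : A, f ↑a = fA a) ∧ (∀ b : B, f ↑b = fB b)

/-!
Write `p = z₁ ⋯ z_{k-1}` and call `g` a proper extension of `p` if its normal form begins with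
`z₁, …, z_{k-1}` and has at least one more syllable. Then `γ` is a proper extension and `1` is
not (the normal form theorem, read off from `Monoid.PushoutI` through the universal property),
and right multiplication by an element of `A ∪ B` sends a proper extension to a proper
extension or into `pC`. Stripping letters off the right end of a geodesic word for `γ`, some
prefix therefore evaluates to `pc'` with `c' ∈ C`, and the inverse of the remaining suffix is a
word of length at most `‖γ‖` representing `(z_k c)⁻¹ c'`.
-/

open Monoid
open scoped Pointwise

universe u v

instance Monoid.PushoutI.countable {ι : Type*} [Countable ι] {G : ι → Type*}
    [∀ i, Monoid (G i)] [∀ i, Countable (G i)] {H : Type*} [Monoid H] [Countable H]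
    (φ : ∀ i, H →* G i) : Countable (PushoutI φ) := by
  unfold PushoutI Coprod CoprodI Con.Quotient
  infer_instance

theorem Subgroup.countable_of_closure_eq_top {G : Type*} [Group G] {s : Set G}
    (hs : s.Countable) (h : Subgroup.closure s = ⊤) : Countable G := by
  have := hs.to_subtype
  refine ((FreeGroup.lift_surjective_iff_closure_range_eq_top (f := ((↑) : s → G))).2 ?_).countable
  rwa [Subtype.range_coe]

section WordNorm

variable {G : Type*} [Group G] {S : Set G}

theorem wordNorm_prod_le_length {l : List G} (hl : ∀ x ∈ l, x ∈ S) :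
    wordNorm S l.prod ≤ l.length :=
  Nat.sInf_le ⟨l, rfl, hl, rfl⟩

theorem wordNorm_prod_inv_le_length (hS : ∀ s ∈ S, s⁻¹ ∈ S) {l : List G}
    (hl : ∀ x ∈ l, x ∈ S) : wordNorm S l.prod⁻¹ ≤ l.length := by
  rw [List.prod_inv_reverse]
  refine (wordNorm_prod_le_length ?_).trans (by simp)
  simp only [List.mem_reverse, List.mem_map]
  rintro _ ⟨x, hx, rfl⟩
  exact hS x (hl x hx)

theorem exists_list_length_eq_wordNorm (hS : ∀ s ∈ S, s⁻¹ ∈ S)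
    (hgen : Subgroup.closure S = ⊤) (g : G) :
    ∃ l : List G, l.length = wordNorm S g ∧ (∀ x ∈ l, x ∈ S) ∧ l.prod = g := by
  have hg : g ∈ Submonoid.closure S := by
    have := Subgroup.closure_toSubmonoid S
    rw [hgen, Set.union_eq_left.2 fun s hs => by simpa using hS _ hs] at this
    exact this ▸ Subgroup.mem_top g
  obtain ⟨l, hlS, hl⟩ := Submonoid.exists_list_of_mem_closure hg
  exact Nat.sInf_mem (s := {k | ∃ l : List G, l.length = k ∧ (∀ x ∈ l, x ∈ S) ∧ l.prod = g})
    ⟨l.length, l, rfl, hlS, hl⟩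

end WordNorm

theorem List.exists_prefix_prod_mem {G : Type*} [Group G] {U V : Set G} (h1 : 1 ∉ U)
    {w : List G} (hstep : ∀ s ∈ w, ∀ g ∈ U, g * s⁻¹ ∈ U ∪ V) (hw : w.prod ∈ U) :
    ∃ w₁ w₂, w₁ ++ w₂ = w ∧ w₁.prod ∈ V := by
  induction w using List.reverseRecOn with
  | nil => exact absurd hw (by simpa using h1)
  | append_singleton w s ih =>
    have hw' : w.prod ∈ U ∪ V := by simpa using hstep s (by simp) _ hw
    rcases hw' with hU | hV
    · obtain ⟨w₁, w₂, rfl, hw₁⟩ := ih (fun s hs => hstep s (by simp [hs])) hU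
      exact ⟨w₁, w₂ ++ [s], by simp, hw₁⟩
    · exact ⟨w, [s], rfl, hV⟩

section Syllables

variable {G : Type u} [Group G] {A B C : Subgroup G}

/-- Side `true` is `A`, side `false` is `B`, matching `Monoid.PushoutI` over the index `Bool`. -/
abbrev Syllable (A B : Subgroup G) : Type u := Σ b : Bool, (cond b A B : Subgroup G)

def syllablesProd (L : List (Syllable A B)) : G := (L.map fun x => (x.2 : G)).prod

def IsReducedSyllables (C : Subgroup G) (L : List (Syllable A B)) : Prop :=
  (∀ x ∈ L, (x.2 : G) ∉ C) ∧ L.IsChain fun x y => x.1 ≠ y.1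

theorem isReducedSyllables_append_singleton {L : List (Syllable A B)} {x : Syllable A B} :
    IsReducedSyllables C (L ++ [x]) ↔
      IsReducedSyllables C L ∧ (x.2 : G) ∉ C ∧ ∀ y ∈ L.getLast?, y.1 ≠ x.1 := by
  simp only [IsReducedSyllables, List.isChain_append, List.mem_append, List.mem_singleton,
    or_imp, forall_and, forall_eq, List.isChain_singleton, List.head?_cons, Option.mem_def,
    Option.some.injEq, forall_eq', true_and]
  tauto

theorem isReducedSyllables_ofFn {k : ℕ} {f : Fin k → Syllable A B} (hC : ∀ i, ((f i).2 : G) ∉ C)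
    (halt : ∀ i j : Fin k, (j : ℕ) = i + 1 → (f j).1 ≠ (f i).1) :
    IsReducedSyllables C (List.ofFn f) := by
  refine ⟨by simpa [List.mem_ofFn] using hC, List.isChain_iff_getElem.2 fun i hi => ?_⟩
  simp only [List.length_ofFn] at hi
  simpa using (halt ⟨i, by omega⟩ ⟨i + 1, hi⟩ rfl).symm

/-- Multiplying a reduced word by a letter of `A` or `B` changes at most its last syllable
and appends at most one new syllable. -/
theorem IsReducedSyllables.exists_mul_eq (hCA : C ≤ A) (hCB : C ≤ B)
    {L : List (Syllable A B)} {x : Syllable A B} (hL : IsReducedSyllables C (L ++ [x]))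
    {c t : G} (hc : c ∈ C) {e : Bool} (ht : t ∈ cond e A B) :
    ∃ N c', IsReducedSyllables C (L ++ N) ∧ c' ∈ C ∧
      syllablesProd (L ++ [x]) * c * t = syllablesProd (L ++ N) * c' := by
  have hCe : C ≤ cond e A B := by cases e; exacts [hCB, hCA]
  have hct : c * t ∈ cond e A B := mul_mem (hCe hc) ht
  by_cases hctC : c * t ∈ C
  · exact ⟨[x], c * t, hL, hctC, by simp [mul_assoc]⟩
  obtain ⟨hLred, hxC, hLx⟩ := isReducedSyllables_append_singleton.1 hL
  obtain ⟨d, u⟩ := x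
  by_cases hed : e = d
  · subst hed
    set v : (cond e A B : Subgroup G) := u * ⟨c * t, hct⟩
    by_cases hvC : (v : G) ∈ C
    · exact ⟨[], v, by simpa using hLred, hvC, by simp [syllablesProd, v, mul_assoc]⟩
    · exact ⟨[⟨e, v⟩], 1, isReducedSyllables_append_singleton.2 ⟨hLred, hvC, hLx⟩, one_mem C,
        by simp [syllablesProd, v, mul_assoc]⟩
  · refine ⟨[⟨d, u⟩, ⟨e, ⟨c * t, hct⟩⟩], 1, ?_, one_mem C, by simp [syllablesProd, mul_assoc]⟩
    rw [← List.singleton_append, ← List.append_assoc]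
    exact isReducedSyllables_append_singleton.2 ⟨hL, hctC, by simp [Ne.symm hed]⟩

end Syllables

namespace IsAmalgamatedProduct

variable {G : Type u} [Group G] {A B C : Subgroup G}

def inclusion (hG : IsAmalgamatedProduct.{u, v} G A B C) (b : Bool) :
    C →* (cond b A B : Subgroup G) :=
  Subgroup.inclusion (by cases b; exacts [hG.2.1, hG.1])

/-- The universal property only speaks about groups in universe `v`; countability lets the
pushout be shrunk into it. -/
theorem exists_hom_pushoutI [Countable G] (hG : IsAmalgamatedProduct.{u, v} G A B C) :
    ∃ F : G →* PushoutI hG.inclusion,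
      ∀ b (x : (cond b A B : Subgroup G)), F x = PushoutI.of b x := by
  have : Small.{v} (PushoutI hG.inclusion) := Countable.toSmall _
  let e : Shrink.{v} (PushoutI hG.inclusion) ≃* PushoutI hG.inclusion := Shrink.mulEquiv
  obtain ⟨f, hfA, hfB⟩ := hG.2.2.2 (e.symm.toMonoidHom.comp (PushoutI.of (φ := hG.inclusion) true))
    (e.symm.toMonoidHom.comp (PushoutI.of (φ := hG.inclusion) false)) fun x hxA hxB hxC => by
      have hA : (⟨x, hxA⟩ : A) = hG.inclusion true ⟨x, hxC⟩ := rfl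
      have hB : (⟨x, hxB⟩ : B) = hG.inclusion false ⟨x, hxC⟩ := rfl
      simp only [MonoidHom.comp_apply, hA, hB, PushoutI.of_apply_eq_base]
  refine ⟨e.toMonoidHom.comp f, ?_⟩
  rintro (_ | _) x <;> simp [hfA, hfB]

/-- The normal form theorem for amalgamated free products. -/
theorem syllablesProd_notMem [Countable G] (hG : IsAmalgamatedProduct.{u, v} G A B C)
    {L : List (Syllable A B)} (hL : IsReducedSyllables C L) (hne : L ≠ []) :
    syllablesProd L ∉ C := by
  intro hLC
  obtain ⟨F, hF⟩ := hG.exists_hom_pushoutI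
  let W : CoprodI.Word fun b => (cond b A B : Subgroup G) :=
    ⟨L, fun x hx h1 => hL.1 x hx (by simp [h1]), hL.2⟩
  have hW : PushoutI.Reduced hG.inclusion W := by
    rintro x hx ⟨c, hc⟩
    exact hL.1 _ hx (by rw [← hc]; exact c.2)
  have hWprod : PushoutI.ofCoprodI W.prod = PushoutI.base hG.inclusion ⟨_, hLC⟩ := by
    rw [← PushoutI.of_apply_eq_base _ true, ← hF]
    change _ = F (syllablesProd L)
    simp only [CoprodI.Word.prod, syllablesProd, map_list_prod, List.map_map]
    exact congrArg List.prod (List.map_congr_left fun x _ => by simp [hF])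
  exact hne congr(CoprodI.Word.toList
    $(hW.eq_empty_of_mem_range (fun _ => Subgroup.inclusion_injective _) ⟨_, hWprod.symm⟩))

end IsAmalgamatedProduct

section Extensions

variable {G : Type u} [Group G] {A B C : Subgroup G}

def properExtensions (C : Subgroup G) (D : List (Syllable A B)) : Set G :=
  {g | ∃ M c, M ≠ [] ∧ IsReducedSyllables C (D ++ M) ∧ c ∈ C ∧ g = syllablesProd (D ++ M) * c}

theorem IsAmalgamatedProduct.one_notMem_properExtensions [Countable G]
    (hG : IsAmalgamatedProduct.{u, v} G A B C) (D : List (Syllable A B)) :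
    1 ∉ properExtensions C D := by
  rintro ⟨M, c, hM, hred, hc, h1⟩
  refine hG.syllablesProd_notMem hred (by simp [hM]) ?_
  rw [eq_inv_of_mul_eq_one_left h1.symm]
  exact inv_mem hc

theorem mul_mem_properExtensions_or_mem_leftCoset (hCA : C ≤ A) (hCB : C ≤ B)
    {D : List (Syllable A B)} {g t : G} (hg : g ∈ properExtensions C D) {e : Bool}
    (ht : t ∈ cond e A B) :
    g * t ∈ properExtensions C D ∪ syllablesProd D • (C : Set G) := by
  obtain ⟨M, c, hM, hred, hc, rfl⟩ := hg
  obtain ⟨M₁, x, rfl⟩ := (List.eq_nil_or_concat' M).resolve_left hM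
  rw [← List.append_assoc] at hred ⊢
  obtain ⟨N, c', hN, hc', heq⟩ := hred.exists_mul_eq hCA hCB hc ht
  rw [heq]
  rcases eq_or_ne (M₁ ++ N) [] with hMN | hMN
  · right
    rw [mem_leftCoset_iff]
    simpa [List.append_assoc, hMN, syllablesProd] using hc'
  · exact Or.inl ⟨M₁ ++ N, c', hMN, by simpa using hN, hc', by simp⟩

end Extensions

theorem IsAmalgamatedProduct.exists_wordNorm_le {G : Type u} [Group G] [Countable G]
    {A B C : Subgroup G} (hG : IsAmalgamatedProduct.{u, v} G A B C) {S : Set G}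
    (hS : ∀ s ∈ S, s⁻¹ ∈ S) (hgen : Subgroup.closure S = ⊤) (hSAB : S ⊆ A ∪ B)
    {D : List (Syllable A B)} {x : Syllable A B} (hred : IsReducedSyllables C (D ++ [x]))
    {c : G} (hc : c ∈ C) :
    ∃ c' ∈ C, wordNorm S ((x.2 * c)⁻¹ * c') ≤ wordNorm S (syllablesProd (D ++ [x]) * c) := by
  obtain ⟨w, hlen, hwS, hw⟩ :=
    exists_list_length_eq_wordNorm hS hgen (syllablesProd (D ++ [x]) * c)
  have hstep : ∀ s ∈ w, ∀ g ∈ properExtensions C D,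
      g * s⁻¹ ∈ properExtensions C D ∪ syllablesProd D • (C : Set G) := by
    intro s hs g hg
    rcases hSAB (hwS s hs) with hsA | hsB
    · exact mul_mem_properExtensions_or_mem_leftCoset hG.1 hG.2.1 hg (e := true) (inv_mem hsA)
    · exact mul_mem_properExtensions_or_mem_leftCoset hG.1 hG.2.1 hg (e := false) (inv_mem hsB)
  obtain ⟨w₁, w₂, rfl, hw₁⟩ := List.exists_prefix_prod_mem (hG.one_notMem_properExtensions D)
    hstep ⟨[x], c, by simp, hred, hc, hw⟩
  refine ⟨_, (mem_leftCoset_iff _).1 hw₁, ?_⟩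
  have hw₂ : (x.2 * c)⁻¹ * ((syllablesProd D)⁻¹ * w₁.prod) = w₂.prod⁻¹ := by
    simp only [List.prod_append, syllablesProd, List.map_append, List.map_singleton,
      List.prod_singleton] at hw ⊢
    rw [eq_inv_mul_of_mul_eq hw]
    group
  calc wordNorm S ((x.2 * c)⁻¹ * ((syllablesProd D)⁻¹ * w₁.prod))
      = wordNorm S w₂.prod⁻¹ := by rw [hw₂]
    _ ≤ w₂.length := wordNorm_prod_inv_le_length hS fun s hs => hwS s (by simp [hs])
    _ ≤ (w₁ ++ w₂).length := by simp
    _ = _ := hlen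

/-- **Assertion 2.2.** Let `γ ∈ A *_C B` have normal presentation
`γ = z₁ ⋯ z_k c` with `k ≥ 1`; here `c ∈ C` and the syllables `z i`
alternate between `A ∖ C` and `B ∖ C` (`side i = true` marks an `A`-syllable
and `side i = false` a `B`-syllable).  Then `‖γ‖ ≥ d(z_k c, C)`, where `‖·‖`
is the word norm of `A *_C B` with respect to `S_A ∪ S_B` and
`d(z_k c, C) = inf {d(z_k c, c'') : c'' ∈ C}`.  This holds for every choice
of the sections `s_A` and `s_B`, i.e. for every alternating presentation. -/
theorem wordNorm_ge_dist_last_syllable {G : Type*} [Group G] (A B C : Subgroup G)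
    (hG : IsAmalgamatedProduct G A B C)
    (SA SB : Set G) (hSAfin : SA.Finite) (hSBfin : SB.Finite)
    (hSAsymm : ∀ s ∈ SA, s⁻¹ ∈ SA) (hSBsymm : ∀ s ∈ SB, s⁻¹ ∈ SB)
    (hSAgen : Subgroup.closure SA = A) (hSBgen : Subgroup.closure SB = B)
    (k : ℕ) (hk : 1 ≤ k) (z : Fin k → G) (side : Fin k → Bool)
    (hA : ∀ i, side i = true → z i ∈ A) (hB : ∀ i, side i = false → z i ∈ B)
    (hnotC : ∀ i, z i ∉ C)
    (halt : ∀ i j : Fin k, (j : ℕ) = (i : ℕ) + 1 → side j ≠ side i)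
    (c : G) (hc : c ∈ C) (γ : G) (hγ : γ = (List.ofFn z).prod * c) :
    sInf ((fun c'' => wordNorm (SA ∪ SB) ((z ⟨k - 1, by omega⟩ * c)⁻¹ * c'')) ''
        (C : Set G)) ≤
      wordNorm (SA ∪ SB) γ := by
  obtain ⟨m, rfl⟩ : ∃ m, k = m + 1 := ⟨k - 1, by omega⟩
  have hS : ∀ s ∈ SA ∪ SB, s⁻¹ ∈ SA ∪ SB := fun s hs => hs.imp (hSAsymm s) (hSBsymm s)
  have hgen : Subgroup.closure (SA ∪ SB) = ⊤ := by
    rw [Subgroup.closure_union, hSAgen, hSBgen, ← hG.2.2.1, Subgroup.closure_union,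
      Subgroup.closure_eq, Subgroup.closure_eq]
  have : Countable G := Subgroup.countable_of_closure_eq_top (hSAfin.union hSBfin).countable hgen
  have hSAB : SA ∪ SB ⊆ A ∪ B := Set.union_subset_union
    (hSAgen ▸ Subgroup.subset_closure) (hSBgen ▸ Subgroup.subset_closure)
  let syl : Fin (m + 1) → Syllable A B := fun i =>
    ⟨side i, ⟨z i, by cases h : side i; exacts [hB i h, hA i h]⟩⟩
  have hred := isReducedSyllables_ofFn (f := syl) hnotC halt
  have hsyl : syllablesProd (List.ofFn syl) = (List.ofFn z).prod := by
    simp [syllablesProd, List.map_ofFn, Function.comp_def, syl]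
  rw [List.ofFn_succ', List.concat_eq_append] at hred hsyl
  obtain ⟨c', hc', hle⟩ := hG.exists_wordNorm_le hS hgen hSAB hred hc
  exact (Nat.sInf_le (Set.mem_image_of_mem _ hc')).trans (hγ ▸ hsyl ▸ hle)
end

section
/- Let Γ be the free product of finitely many copies of ℤ/2, i.e., the right-angled Coxeter group on a finite generating set S with m_{ss'} = ∞ for all s ≠ s' (equivalently, with zero-dimensional nerve). Then asdim Γ ≤ 1, where Γ carries the word metric with respect to S. -/
/-- `AsdimLE d n` : the asymptotic dimension of the space `X` with distance
function `d` is at most `n`: for every `r > 0` there are `n + 1` families of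
`r`-disjoint, uniformly bounded subsets of `X` which together cover `X`. -/
def AsdimLE {X : Type*} (d : X → X → ℝ) (n : ℕ) : Prop :=
  ∀ r : ℝ, 0 < r → ∃ (𝒰 : Fin (n + 1) → Set (Set X)) (D : ℝ),
    (∀ i, ∀ U ∈ 𝒰 i, ∀ V ∈ 𝒰 i, U ≠ V → ∀ x ∈ U, ∀ y ∈ V, r ≤ d x y) ∧
    (∀ i, ∀ U ∈ 𝒰 i, ∀ x ∈ U, ∀ y ∈ U, d x y ≤ D) ∧
    (∀ x : X, ∃ i, ∃ U ∈ 𝒰 i, x ∈ U)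

/-- The asymptotic dimension of the space `X` with distance function `d`,
as an extended natural number: the least `n` with `AsdimLE d n` (`⊤` if none). -/
noncomputable def asDim {X : Type*} (d : X → X → ℝ) : ℕ∞ :=
  sInf {N : ℕ∞ | ∃ n : ℕ, N = (n : ℕ∞) ∧ AsdimLE d n}

/-!
Every element of a free product of copies of `ℤ/2` has a unique normal form, a word without two
equal adjacent letters, and the word metric becomes the path metric of the tree of such words:
`d(u, v) = (|u| - c) + (|v| - c)` with `c` the length of the longest common prefix. A tree has
asymptotic dimension at most one: for `k ≥ r`, cut it into annuli `jk ≤ |u| < (j + 1)k` and split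
each annulus according to the prefix of length `(j - 1)k`. The pieces have diameter at most `4k`,
and distinct pieces in annuli of the same parity are at distance at least `k`.
-/

theorem AsdimLE.comp {X Y : Type*} {d : X → X → ℝ} {n : ℕ} (h : AsdimLE d n) (f : Y → X) :
    AsdimLE (fun x y => d (f x) (f y)) n := by
  intro r hr
  obtain ⟨𝒰, D, hsep, hbdd, hcover⟩ := h r hr
  refine ⟨fun i => Set.preimage f '' 𝒰 i, D, ?_, ?_, fun y => ?_⟩
  · rintro i _ ⟨U, hU, rfl⟩ _ ⟨V, hV, rfl⟩ hUV x hx y hy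
    exact hsep i U hU V hV (fun h => hUV (h ▸ rfl)) _ hx _ hy
  · rintro i _ ⟨U, hU, rfl⟩ x hx y hy
    exact hbdd i U hU _ hx _ hy
  · obtain ⟨i, U, hU, hy⟩ := hcover (f y)
    exact ⟨i, f ⁻¹' U, ⟨U, hU, rfl⟩, hy⟩

theorem AsdimLE.asDim_le {X : Type*} {d : X → X → ℝ} {n : ℕ} (h : AsdimLE d n) :
    asDim d ≤ n :=
  sInf_le ⟨n, rfl, h⟩

section WordTree

variable {α : Type*} [DecidableEq α]

def commonPrefixLength : List α → List α → ℕ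
  | a :: u, b :: v => if a = b then commonPrefixLength u v + 1 else 0
  | _, _ => 0

theorem le_commonPrefixLength_iff {m : ℕ} {u v : List α} :
    m ≤ commonPrefixLength u v ↔ m ≤ u.length ∧ u.take m = v.take m := by
  induction m generalizing u v with
  | zero => simp
  | succ m ih =>
    rcases u with _ | ⟨a, u⟩ <;> rcases v with _ | ⟨b, v⟩
    · simp [commonPrefixLength]
    · simp [commonPrefixLength]
    · simp [commonPrefixLength]
    · by_cases hab : a = b
      · simp [commonPrefixLength, hab, ih]
      · simp [commonPrefixLength, hab]

theorem commonPrefixLength_le_length_left (u v : List α) :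
    commonPrefixLength u v ≤ u.length :=
  (le_commonPrefixLength_iff.mp le_rfl).1

theorem take_commonPrefixLength (u v : List α) :
    u.take (commonPrefixLength u v) = v.take (commonPrefixLength u v) :=
  (le_commonPrefixLength_iff.mp le_rfl).2

theorem commonPrefixLength_le_length_right (u v : List α) :
    commonPrefixLength u v ≤ v.length := by
  have h := congrArg List.length (take_commonPrefixLength u v)
  simp only [List.length_take] at h
  have := commonPrefixLength_le_length_left u v
  omega

theorem head_drop_commonPrefixLength_ne :
    ∀ u v : List α, ∀ a ∈ (u.drop (commonPrefixLength u v)).head?,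
      ∀ b ∈ (v.drop (commonPrefixLength u v)).head?, a ≠ b
  | [], _ => by simp [commonPrefixLength]
  | _ :: _, [] => by simp [commonPrefixLength]
  | a :: u, b :: v => by
    by_cases hab : a = b
    · simpa [commonPrefixLength, hab] using head_drop_commonPrefixLength_ne u v
    · simp [commonPrefixLength, hab]

def treeDist (u v : List α) : ℕ :=
  (u.length - commonPrefixLength u v) + (v.length - commonPrefixLength u v)

/-- The annulus `|u| / k` of `u`, together with the prefix of `u` one annulus closer to the root. -/
def annulusKey (k : ℕ) (u : List α) : ℕ × List α :=
  (u.length / k, u.take (u.length / k * k - k))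

theorem treeDist_le_of_annulusKey_eq {k : ℕ} (hk : 0 < k) {u v : List α}
    (h : annulusKey k u = annulusKey k v) : treeDist u v ≤ 4 * k := by
  obtain ⟨hj, htake⟩ := Prod.mk.inj h
  have hu := Nat.lt_div_mul_add (a := u.length) hk
  have hv := Nat.lt_div_mul_add (a := v.length) hk
  have hu' := Nat.div_mul_le_self u.length k
  rw [← hj] at hv htake
  have hcommon : u.length / k * k - k ≤ commonPrefixLength u v :=
    le_commonPrefixLength_iff.mpr ⟨by omega, htake⟩
  unfold treeDist
  omega

theorem le_treeDist_of_annulusKey_ne {k : ℕ} (hk : 0 < k) {u v : List α}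
    (hpar : (annulusKey k u).1 % 2 = (annulusKey k v).1 % 2)
    (hne : annulusKey k u ≠ annulusKey k v) : k ≤ treeDist u v := by
  obtain ⟨j, hj⟩ : ∃ j, u.length / k = j := ⟨_, rfl⟩
  obtain ⟨j', hj'⟩ : ∃ j', v.length / k = j' := ⟨_, rfl⟩
  simp only [annulusKey, hj, hj'] at hpar hne
  have hu := Nat.lt_div_mul_add (a := u.length) hk
  have hv := Nat.lt_div_mul_add (a := v.length) hk
  have hu' := Nat.div_mul_le_self u.length k
  have hv' := Nat.div_mul_le_self v.length k
  rw [hj] at hu hu'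
  rw [hj'] at hv hv'
  have hcu := commonPrefixLength_le_length_left u v
  have hcv := commonPrefixLength_le_length_right u v
  unfold treeDist
  obtain hjj | rfl | hjj : j + 2 ≤ j' ∨ j = j' ∨ j' + 2 ≤ j := by omega
  · have := Nat.mul_le_mul_right k hjj
    have : (j + 2) * k = j * k + 2 * k := by ring
    omega
  · have hprefix : ¬ j * k - k ≤ commonPrefixLength u v := fun h =>
      hne (by rw [(le_commonPrefixLength_iff.mp h).2])
    omega
  · have := Nat.mul_le_mul_right k hjj
    have : (j' + 2) * k = j' * k + 2 * k := by ring
    omega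

theorem asdimLE_one_treeDist : AsdimLE (fun u v : List α => (treeDist u v : ℝ)) 1 := by
  intro r hr
  set k := ⌈r⌉₊
  have hk : 0 < k := Nat.ceil_pos.mpr hr
  refine ⟨fun i => {U | ∃ q : ℕ × List α, q.1 % 2 = i ∧ U = annulusKey k ⁻¹' {q}}, 4 * k,
    ?_, ?_, fun u => ?_⟩
  · rintro i _ ⟨q, hq, rfl⟩ _ ⟨q', hq', rfl⟩ hne u rfl v rfl
    calc r ≤ k := Nat.le_ceil r
      _ ≤ treeDist u v := Nat.cast_le.mpr <| le_treeDist_of_annulusKey_ne hk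
          (hq.trans hq'.symm) (fun h => hne (by rw [h]))
  · rintro i _ ⟨q, hq, rfl⟩ u hu v hv
    show (treeDist u v : ℝ) ≤ 4 * k
    exact_mod_cast treeDist_le_of_annulusKey_eq hk (hu.trans hv.symm)
  · exact ⟨⟨(annulusKey k u).1 % 2, Nat.mod_lt _ two_pos⟩, _, ⟨_, rfl, rfl⟩, rfl⟩

end WordTree

section NormalWord

variable {B : Type*} [DecidableEq B]

/-- The normal forms in a free product of copies of `ℤ/2`. -/
abbrev NormalWord (B : Type*) := {ω : List B // ω.IsChain (· ≠ ·)}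

def NormalWord.mulSimple (s : B) (ω : NormalWord B) : NormalWord B :=
  if h : ω.val.head? = some s then ⟨ω.val.tail, ω.prop.tail⟩
  else ⟨s :: ω.val, List.isChain_cons.mpr ⟨fun _ ht hs => h (hs ▸ ht), ω.prop⟩⟩

theorem NormalWord.mulSimple_of_head?_ne {s : B} {ω : NormalWord B} (h : ω.val.head? ≠ some s) :
    mulSimple s ω = ⟨s :: ω.val, List.isChain_cons.mpr ⟨fun _ ht hs => h (hs ▸ ht), ω.prop⟩⟩ :=
  dif_neg h

theorem NormalWord.mulSimple_involutive (s : B) : Function.Involutive (mulSimple s) := by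
  rintro ⟨_ | ⟨a, ω⟩, hω⟩
  · simp [mulSimple]
  · by_cases has : a = s
    · subst has
      have hhead : ω.head? ≠ some a := fun h => List.isChain_cons.mp hω |>.1 a h rfl
      simp [mulSimple, hhead]
    · apply Subtype.ext
      simp [mulSimple, has]

variable {M : CoxeterMatrix B}

theorem NormalWord.isLiftable_mulSimple (hfree : ∀ s t : B, s ≠ t → M s t = 0) :
    M.IsLiftable fun s => (mulSimple_involutive s).toPerm := by
  intro s t
  by_cases hst : s = t
  · subst hst
    rw [M.diagonal, pow_one]
    exact Equiv.ext (mulSimple_involutive s)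
  · rw [hfree s t hst, pow_zero]

end NormalWord

namespace CoxeterSystem

variable {B : Type*} {M : CoxeterMatrix B} {W : Type*} [Group W]

theorem wordNorm_range_simple (cs : CoxeterSystem M W) (w : W) :
    wordNorm (Set.range cs.simple) w = cs.length w := by
  obtain ⟨ω, hω, rfl⟩ := cs.exists_isReduced w
  have hmem : ω.length ∈ {k | ∃ l : List W, l.length = k ∧ (∀ x ∈ l, x ∈ Set.range cs.simple) ∧
      l.prod = cs.wordProd ω} :=
    ⟨ω.map cs.simple, List.length_map _, fun x hx => (List.mem_map.mp hx).imp fun _ => And.right,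
      rfl⟩
  refine le_antisymm (hω.eq ▸ Nat.sInf_le hmem) (le_csInf ⟨_, hmem⟩ ?_)
  rintro _ ⟨L, rfl, hL, hprod⟩
  obtain ⟨l, rfl⟩ : L ∈ Set.range (List.map cs.simple) := Set.range_list_map _ ▸ hL
  rw [List.length_map, ← hprod]
  exact cs.length_wordProd_le l

theorem IsReduced.isChain_ne {cs : CoxeterSystem M W} {ω : List B} (hω : cs.IsReduced ω) :
    ω.IsChain (· ≠ ·) := by
  induction ω with
  | nil => exact List.isChain_nil
  | cons a ω ih =>
    refine List.isChain_cons.mpr ⟨?_, ih (by simpa using hω.drop 1)⟩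
    rintro b hb rfl
    obtain ⟨ω', rfl⟩ : ∃ ω', ω = a :: ω' := by
      cases ω with
      | nil => simp at hb
      | cons c ω' => exact ⟨ω', by simpa using hb⟩
    have hlen := hω.eq
    rw [cs.wordProd_cons, cs.wordProd_cons, cs.simple_mul_simple_cancel_left] at hlen
    have := cs.length_wordProd_le ω'
    simp only [List.length_cons] at hlen
    omega

section Free

variable [DecidableEq B] (cs : CoxeterSystem M W)

def normalWordAction (hfree : ∀ s t : B, s ≠ t → M s t = 0) :
    W →* Equiv.Perm (NormalWord B) :=
  cs.lift ⟨_, NormalWord.isLiftable_mulSimple hfree⟩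

theorem normalWordAction_wordProd (hfree : ∀ s t : B, s ≠ t → M s t = 0)
    {ω : List B} (hω : ω.IsChain (· ≠ ·)) :
    cs.normalWordAction hfree (cs.wordProd ω) ⟨[], List.isChain_nil⟩ = ⟨ω, hω⟩ := by
  induction ω with
  | nil => simp
  | cons a ω ih =>
    have hhead : ω.head? ≠ some a := fun h => List.isChain_cons.mp hω |>.1 a h rfl
    rw [cs.wordProd_cons, map_mul, Equiv.Perm.mul_apply, ih hω.tail, normalWordAction,
      lift_apply_simple]
    exact NormalWord.mulSimple_of_head?_ne hhead

variable {cs}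

theorem injOn_wordProd_isChain (hfree : ∀ s t : B, s ≠ t → M s t = 0) :
    Set.InjOn cs.wordProd {ω | ω.IsChain (· ≠ ·)} := fun ω hω ω' hω' h => by
  have := cs.normalWordAction_wordProd hfree hω'
  rw [← h, cs.normalWordAction_wordProd hfree hω] at this
  exact congrArg Subtype.val this

theorem isReduced_of_isChain (hfree : ∀ s t : B, s ≠ t → M s t = 0)
    {ω : List B} (hω : ω.IsChain (· ≠ ·)) : cs.IsReduced ω := by
  obtain ⟨ω', hω', h⟩ := cs.exists_isReduced (cs.wordProd ω)
  rwa [cs.injOn_wordProd_isChain hfree hω hω'.isChain_ne h]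

/-- `(π u)⁻¹ * π v` has the normal form obtained from `u` and `v` by cancelling their common
prefix. -/
theorem wordDist_wordProd (hfree : ∀ s t : B, s ≠ t → M s t = 0)
    {u v : List B} (hu : u.IsChain (· ≠ ·)) (hv : v.IsChain (· ≠ ·)) :
    wordDist (Set.range cs.simple) (cs.wordProd u) (cs.wordProd v) = treeDist u v := by
  set c := commonPrefixLength u v
  have hchain : ((u.drop c).reverse ++ v.drop c).IsChain (· ≠ ·) := by
    refine List.isChain_append.mpr ⟨List.isChain_reverse.mpr ((hu.drop c).imp fun _ _ => Ne.symm),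
      hv.drop c, fun a ha b hb => ?_⟩
    rw [List.getLast?_reverse] at ha
    exact head_drop_commonPrefixLength_ne u v a ha b hb
  have hprod :
      (cs.wordProd u)⁻¹ * cs.wordProd v = cs.wordProd ((u.drop c).reverse ++ v.drop c) := by
    have htake : v.take c = u.take c := (take_commonPrefixLength u v).symm
    conv_lhs => rw [← u.take_append_drop c, ← v.take_append_drop c, htake]
    simp only [wordProd_append, wordProd_reverse]
    group
  rw [wordDist, hprod, wordNorm_range_simple, (cs.isReduced_of_isChain hfree hchain).eq]
  simp [treeDist, c]

end Free

end CoxeterSystem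

theorem asdim_free_product_of_order_two_le_one_general {S : Type*}
    (M : CoxeterMatrix S) {W : Type*} [Group W] (cs : CoxeterSystem M W)
    (hfree : ∀ s t : S, s ≠ t → M s t = 0) :
    asDim (fun g h : W => wordDist (Set.range cs.simple) g h) ≤ 1 := by
  classical
  choose nf hnf_reduced hnf using cs.exists_isReduced
  have hdist : ∀ g h : W, wordDist (Set.range cs.simple) g h = treeDist (nf g) (nf h) :=
    fun g h => by
      rw [← cs.wordDist_wordProd hfree (hnf_reduced g).isChain_ne (hnf_reduced h).isChain_ne,
        ← hnf, ← hnf]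
  simp only [hdist]
  exact_mod_cast (asdimLE_one_treeDist.comp nf).asDim_le

/-- If `Γ` is the free product of finitely many copies of `ℤ/2`, i.e. the
right-angled Coxeter group on a finite generating set `S` with
`m_{s s'} = ∞` for all `s ≠ s'` (in Mathlib's convention, `M s s' = 0`
encodes `m_{s s'} = ∞`; equivalently, the nerve is zero-dimensional), then
`asdim Γ ≤ 1`, where `Γ` carries the word metric with respect to the set of
simple reflections. -/
theorem asdim_free_product_of_order_two_le_one {S : Type*} [Finite S]
    (M : CoxeterMatrix S) {W : Type*} [Group W] (cs : CoxeterSystem M W)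
    (hfree : ∀ s t : S, s ≠ t → M s t = 0) :
    asDim (fun g h : W => wordDist (Set.range cs.simple) g h) ≤ 1 :=
  asdim_free_product_of_order_two_le_one_general M cs hfree
end
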